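/- For every nonzero real t, the infinite product ∏_{m=1}^{∞} cos(t/2^m) converges to sin(t)/t (Viète's formula). -/

import Mathlib

/-!
Iterating `sinc (2 * x) = sinc x * cos x` gives `sinc t = sinc (t / 2 ^ n) * ∏_{m=1}^n cos (t / 2 ^ m)`,
and `sinc (t / 2 ^ n) → sinc 0 = 1` by continuity of `sinc`.
-/

open Filter Topology Real

theorem Real.sinc_two_mul (x : ℝ) : sinc (2 * x) = sinc x * cos x := by
  rcases eq_or_ne x 0 with rfl | hx
  · simp [sinc_zero]
  · rw [sinc_of_ne_zero (mul_ne_zero two_ne_zero hx), sinc_of_ne_zero hx, sin_two_mul]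
    field_simp

theorem Real.sinc_eq_sinc_div_two_pow_mul_prod_cos (x : ℝ) (n : ℕ) :
    sinc x = sinc (x / 2 ^ n) * ∏ m ∈ Finset.Icc 1 n, cos (x / 2 ^ m) := by
  induction n with
  | zero => simp
  | succ n ih =>
    have halve : x / 2 ^ n = 2 * (x / 2 ^ (n + 1)) := by
      rw [pow_succ]; field_simp
    rw [Finset.prod_Icc_succ_top (by omega), ih, halve, sinc_two_mul]
    ring

theorem Real.tendsto_prod_cos_div_two_pow (x : ℝ) :
    Tendsto (fun n : ℕ => ∏ m ∈ Finset.Icc 1 n, cos (x / 2 ^ m)) atTop (𝓝 (sinc x)) := by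
  have hdiv : Tendsto (fun n : ℕ => x / 2 ^ n) atTop (𝓝 0) :=
    tendsto_const_nhds.div_atTop (tendsto_pow_atTop_atTop_of_one_lt one_lt_two)
  have hsinc : Tendsto (fun n : ℕ => sinc (x / 2 ^ n)) atTop (𝓝 1) :=
    (continuous_sinc.tendsto' 0 1 sinc_zero).comp hdiv
  have hquot : Tendsto (fun n : ℕ => sinc x / sinc (x / 2 ^ n)) atTop (𝓝 (sinc x / 1)) :=
    tendsto_const_nhds.div hsinc one_ne_zero
  rw [div_one] at hquot
  refine hquot.congr' ?_
  filter_upwards [hsinc.eventually_ne one_ne_zero] with n hn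
  rw [div_eq_iff hn, mul_comm, ← sinc_eq_sinc_div_two_pow_mul_prod_cos]

theorem viete_formula (t : ℝ) (ht : t ≠ 0) :
    Tendsto (fun M : ℕ => ∏ m ∈ Finset.Icc 1 M, Real.cos (t / 2 ^ m)) atTop
      (nhds (Real.sin t / t)) := by
  rw [← sinc_of_ne_zero ht]
  exact tendsto_prod_cos_div_two_pow t
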